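/- There exists a discontinuous function F : 𝒞 → 𝒞 admitting a continuous (ι→^ι)-realizer; concretely, the function F with F(σ) = σ if σ is the constantly-true sequence and F(σ) = the constantly-false sequence otherwise is not continuous, yet there is a continuous function G : 𝒞 → 𝒞 such that for every σ ∈ 𝒞, G(σ) is a ^ι-name of F(σ). -/
import Mathlib


open Filter Topology

/-- A `^ι`-name of `σ ∈ 𝒞`: a double sequence `τ` (identified with an element of
`𝒞` via `Nat.pair`) for which there exists an `M` with `τ (n, m) = σ n` for all
`m ≥ M` and all `n`. -/
def IsHatIotaName (τ σ : ℕ → Bool) : Prop :=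
  ∃ M : ℕ, ∀ n m : ℕ, M ≤ m → τ (Nat.pair n m) = σ n

/-- Auxiliary: `auxA m σ = true` iff `σ i = true` for all `i < m`. -/
def auxA : ℕ → (ℕ → Bool) → Bool
  | 0, _ => true
  | m + 1, σ => σ m && auxA m σ

lemma auxA_continuous (m : ℕ) : Continuous (auxA m) := by
  induction m with
  | zero => exact continuous_const
  | succ m ih =>
      have : (auxA (m + 1)) =
          (fun p : Bool × Bool => p.1 && p.2) ∘ (fun σ => (σ m, auxA m σ)) := rfl
      rw [this]
      exact (continuous_of_discreteTopology).comp ((continuous_apply m).prodMk ih)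

lemma auxA_true (σ : ℕ → Bool) (h : ∀ i, σ i = true) (m : ℕ) : auxA m σ = true := by
  induction m with
  | zero => rfl
  | succ m ih => simp [auxA, ih, h m]

lemma auxA_false (σ : ℕ → Bool) (i : ℕ) (hi : σ i = false) :
    ∀ m, i < m → auxA m σ = false := by
  intro m
  induction m with
  | zero => omega
  | succ m ih =>
      intro him
      rcases Nat.lt_succ_iff_lt_or_eq.mp him with h | h
      · simp [auxA, ih h]
      · subst h; simp [auxA, hi]

/-- The function `F` with `F σ = σ` for the constantly-true
sequence and `F σ = ` constantly-false otherwise is discontinuous, yet admits a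
continuous (ι→^ι)-realizer `G`. -/
theorem stmt16 (F : (ℕ → Bool) → (ℕ → Bool))
    (hF₁ : F (fun _ => true) = (fun _ => true))
    (hF₂ : ∀ σ : ℕ → Bool, σ ≠ (fun _ => true) → F σ = (fun _ => false)) :
    ¬ Continuous F ∧
    ∃ G : (ℕ → Bool) → (ℕ → Bool), Continuous G ∧
      ∀ σ : ℕ → Bool, IsHatIotaName (G σ) (F σ) := by
  constructor
  · intro hc
    -- sequence σ_k : true below k, false at/above k; tends to all-true
    set s : ℕ → (ℕ → Bool) := fun k i => decide (i < k) with hs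
    have htends : Tendsto s atTop (𝓝 (fun _ => true)) := by
      rw [tendsto_pi_nhds]
      intro i
      rw [nhds_discrete, tendsto_pure]
      filter_upwards [eventually_ge_atTop (i + 1)] with k hk
      simp [hs]; omega
    have h2 : Tendsto (fun k => F (s k) 0) atTop (𝓝 true) := by
      have := ((hc.tendsto _).comp htends)
      rw [hF₁] at this
      exact (continuous_apply 0).continuousAt.tendsto.comp this
    rw [nhds_discrete, tendsto_pure] at h2
    obtain ⟨k, hk⟩ := h2.exists
    have hne : s k ≠ (fun _ => true) := by
      intro h
      have := congrFun h k
      simp [hs] at this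
    rw [hF₂ _ hne] at hk
    simp at hk
  · refine ⟨fun σ k => auxA ((Nat.unpair k).2 + 1) σ, ?_, ?_⟩
    · exact continuous_pi fun k => auxA_continuous _
    · intro σ
      by_cases h : σ = (fun _ => true)
      · refine ⟨0, fun n m _ => ?_⟩
        subst h
        rw [hF₁]
        simp [Nat.unpair_pair]
        exact auxA_true _ (fun _ => rfl) _
      · obtain ⟨i, hi⟩ : ∃ i, σ i = false := by
          by_contra hc
          push_neg at hc
          exact h (funext fun i => by simpa using hc i)
        refine ⟨i, fun n m hm => ?_⟩
        rw [hF₂ _ h]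
        simp [Nat.unpair_pair]
        exact auxA_false σ i hi _ (by omega)
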